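/- Let f and g be norms on ℝ^p with dual norms f* and g*, let (a, b) be a linear classifier with a ≠ 0, let ρ > 0, and let x_F ∈ ℝ^p satisfy ⟪a, x_F⟫ < b. Set d := (b − ⟪a, x_F⟫ + ρ · g*(a)) / f*(a). Then for any v ∈ ℝ^p, the point x_F + d • v is an optimal robust counterfactual of x_F under f with robustness norm g and radius ρ if and only if f(v) ≤ 1 and ⟪a, v⟫ = f*(a). -/
import Mathlib


open Finset

noncomputable section

/-- The standard inner product on `Fin p → ℝ`. -/
def dot {p : ℕ} (a x : Fin p → ℝ) : ℝ := ∑ k, a k * x k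

/-- `f` is a norm on `ℝ^p`. -/
def IsNorm {p : ℕ} (f : (Fin p → ℝ) → ℝ) : Prop :=
  (∀ x, f x = 0 ↔ x = 0) ∧ (∀ (c : ℝ) (x : Fin p → ℝ), f (c • x) = |c| * f x) ∧
    (∀ x y, f (x + y) ≤ f x + f y)

/-- The dual norm `f*(w) = sup { ⟪w, v⟫ : f v ≤ 1 }`. -/
def dualNorm {p : ℕ} (f : (Fin p → ℝ) → ℝ) (w : Fin p → ℝ) : ℝ :=
  sSup {t : ℝ | ∃ v : Fin p → ℝ, f v ≤ 1 ∧ t = dot w v}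

/-- `xCF` is an optimal counterfactual of the factual `xF` (classified 'No') under norm `f`. -/
def IsOptCF {p : ℕ} (a : Fin p → ℝ) (b : ℝ) (f : (Fin p → ℝ) → ℝ)
    (xF xCF : Fin p → ℝ) : Prop :=
  b ≤ dot a xCF ∧ ∀ z : Fin p → ℝ, b ≤ dot a z → f (xCF - xF) ≤ f (z - xF)

/-- `xRCF` is an optimal robust counterfactual of the factual `xF` (classified 'No')
under norm `f`, with robustness norm `g` and radius `ρ`. -/
def IsOptRCF {p : ℕ} (a : Fin p → ℝ) (b : ℝ) (f g : (Fin p → ℝ) → ℝ) (ρ : ℝ)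
    (xF xRCF : Fin p → ℝ) : Prop :=
  (∀ s : Fin p → ℝ, g s ≤ ρ → b ≤ dot a (xRCF + s)) ∧
    ∀ z : Fin p → ℝ, (∀ s : Fin p → ℝ, g s ≤ ρ → b ≤ dot a (z + s)) →
      f (xRCF - xF) ≤ f (z - xF)

/-- `w` is a subgradient of `f` at `x₀`. -/
def IsSubgradient {p : ℕ} (f : (Fin p → ℝ) → ℝ) (x₀ w : Fin p → ℝ) : Prop :=
  ∀ y : Fin p → ℝ, f x₀ + dot w (y - x₀) ≤ f y

namespace RCFAux

variable {p : ℕ} {f g : (Fin p → ℝ) → ℝ} {a : Fin p → ℝ}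

lemma dot_add (a x y : Fin p → ℝ) : dot a (x + y) = dot a x + dot a y := by
  simp [dot, mul_add, Finset.sum_add_distrib]

lemma dot_smul (a : Fin p → ℝ) (c : ℝ) (x : Fin p → ℝ) : dot a (c • x) = c * dot a x := by
  simp [dot, Finset.mul_sum, mul_left_comm]

lemma dot_zero (a : Fin p → ℝ) : dot a (0 : Fin p → ℝ) = 0 := by simp [dot]

lemma dot_self_pos (ha : a ≠ 0) : 0 < dot a a := by
  obtain ⟨k, hk⟩ := Function.ne_iff.mp ha
  exact Finset.sum_pos' (fun i _ => mul_self_nonneg _)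
    ⟨k, Finset.mem_univ k, mul_self_pos.mpr hk⟩

lemma norm_zero (hf : IsNorm f) : f 0 = 0 := (hf.1 0).mpr rfl

lemma norm_neg (hf : IsNorm f) (x : Fin p → ℝ) : f (-x) = f x := by
  have := hf.2.1 (-1) x
  simpa using this

lemma norm_nonneg' (hf : IsNorm f) (x : Fin p → ℝ) : 0 ≤ f x := by
  have h := hf.2.2 x (-x)
  rw [add_neg_cancel, norm_zero hf, norm_neg hf] at h
  linarith

lemma norm_pos (hf : IsNorm f) {x : Fin p → ℝ} (hx : x ≠ 0) : 0 < f x :=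
  lt_of_le_of_ne (norm_nonneg' hf x) (fun h => hx ((hf.1 x).mp h.symm))

lemma norm_sum_le (hf : IsNorm f) {ι : Type*} (s : Finset ι) (u : ι → (Fin p → ℝ)) :
    f (∑ i ∈ s, u i) ≤ ∑ i ∈ s, f (u i) := by
  classical
  induction s using Finset.induction_on with
  | empty => simp [norm_zero hf]
  | @insert i s hns ih =>
    rw [Finset.sum_insert hns, Finset.sum_insert hns]
    exact le_trans (hf.2.2 _ _) (by linarith)

lemma exists_upper (hf : IsNorm f) : ∃ C ≥ 0, ∀ x, f x ≤ C * ‖x‖ := by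
  classical
  set e : Fin p → Fin p → ℝ := fun i j => if i = j then 1 else 0 with he
  refine ⟨∑ i, f (e i), Finset.sum_nonneg fun i _ => norm_nonneg' hf _, fun x => ?_⟩
  have hx : x = ∑ i, x i • e i := pi_eq_sum_univ x
  calc f x = f (∑ i, x i • e i) := by rw [← hx]
    _ ≤ ∑ i, f (x i • e i) := norm_sum_le hf _ _
    _ = ∑ i, |x i| * f (e i) := by simp only [hf.2.1]
    _ ≤ ∑ i, ‖x‖ * f (e i) := by
        refine Finset.sum_le_sum fun i _ => ?_
        have h1 : |x i| ≤ ‖x‖ := by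
          have := norm_le_pi_norm x i
          simpa [Real.norm_eq_abs] using this
        exact mul_le_mul_of_nonneg_right h1 (norm_nonneg' hf _)
    _ = (∑ i, f (e i)) * ‖x‖ := by
        simp_rw [mul_comm ‖x‖]; rw [← Finset.sum_mul]

lemma norm_continuous (hf : IsNorm f) : Continuous f := by
  obtain ⟨C, hC0, hC⟩ := exists_upper hf
  rw [Metric.continuous_iff]
  intro x ε hε
  refine ⟨ε / (C + 1), by positivity, fun y hy => ?_⟩
  have h1 : f y ≤ f x + f (y - x) := by
    have := hf.2.2 x (y - x); simpa using this
  have h2 : f x ≤ f y + f (y - x) := by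
    have := hf.2.2 y (x - y)
    have hx : f (x - y) = f (y - x) := by
      rw [show x - y = -(y - x) by ring, norm_neg hf]
    simpa [hx] using this
  have h3 : f (y - x) ≤ C * ‖y - x‖ := hC _
  have h4 : ‖y - x‖ = dist y x := by rw [dist_eq_norm]
  rw [Real.dist_eq, abs_lt]
  have hd : dist y x ≥ 0 := dist_nonneg
  have h5 : dist y x * (C + 1) < ε := (lt_div_iff₀ (by positivity)).mp hy
  constructor <;> nlinarith

lemma exists_lower (hp : 1 ≤ p) (hf : IsNorm f) : ∃ m > 0, ∀ x, m * ‖x‖ ≤ f x := by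
  haveI : Nonempty (Fin p) := ⟨⟨0, hp⟩⟩
  have hsne : (Metric.sphere (0 : Fin p → ℝ) 1).Nonempty :=
    NormedSpace.sphere_nonempty.mpr zero_le_one
  obtain ⟨v₀, hv₀s, hmin⟩ := (isCompact_sphere (0 : Fin p → ℝ) 1).exists_isMinOn hsne
    (norm_continuous hf).continuousOn
  have hv₀ : ‖v₀‖ = 1 := by simpa using hv₀s
  have hv₀ne : v₀ ≠ 0 := by intro h; rw [h] at hv₀; simp at hv₀
  refine ⟨f v₀, norm_pos hf hv₀ne, fun x => ?_⟩
  rcases eq_or_ne x 0 with rfl | hx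
  · simp [norm_zero hf]
  · have hxn : (0:ℝ) < ‖x‖ := norm_pos_iff.mpr hx
    have hu : ‖x‖⁻¹ • x ∈ Metric.sphere (0 : Fin p → ℝ) 1 := by
      simp [norm_smul, abs_of_pos (inv_pos.mpr hxn), inv_mul_cancel₀ hxn.ne']
    have := hmin hu
    simp only [Set.mem_setOf_eq] at this
    rw [hf.2.1, abs_of_pos (inv_pos.mpr hxn)] at this
    calc f v₀ * ‖x‖ ≤ (‖x‖⁻¹ * f x) * ‖x‖ := by
          exact mul_le_mul_of_nonneg_right this hxn.le
      _ = f x := by field_simp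
  
lemma dual_spec (hp : 1 ≤ p) (hf : IsNorm f) (a : Fin p → ℝ) :
    (∀ v, f v ≤ 1 → dot a v ≤ dualNorm f a) ∧
      (∃ v, f v ≤ 1 ∧ dot a v = dualNorm f a) := by
  obtain ⟨m, hm, hlow⟩ := exists_lower hp hf
  have hBc : IsCompact {v : Fin p → ℝ | f v ≤ 1} := by
    refine (isCompact_closedBall (0 : Fin p → ℝ) m⁻¹).of_isClosed_subset
      (isClosed_le (norm_continuous hf) continuous_const) ?_
    intro v hv
    simp only [Metric.mem_closedBall, dist_zero_right]
    rw [Set.mem_setOf_eq] at hv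
    have h1 : m * ‖v‖ ≤ m * m⁻¹ := by
      rw [mul_inv_cancel₀ hm.ne']; linarith [hlow v]
    exact le_of_mul_le_mul_left h1 hm
  have hdc : Continuous (dot a) := by
    unfold dot
    exact continuous_finset_sum _ fun k _ => (continuous_const.mul (continuous_apply k))
  have hSeq : {t : ℝ | ∃ v : Fin p → ℝ, f v ≤ 1 ∧ t = dot a v}
      = dot a '' {v : Fin p → ℝ | f v ≤ 1} := by
    ext t; simp [eq_comm, and_comm]
  have hSc : IsCompact {t : ℝ | ∃ v : Fin p → ℝ, f v ≤ 1 ∧ t = dot a v} := by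
    rw [hSeq]; exact hBc.image hdc
  have hSne : {t : ℝ | ∃ v : Fin p → ℝ, f v ≤ 1 ∧ t = dot a v}.Nonempty :=
    ⟨0, 0, by simp [norm_zero hf], (dot_zero a).symm⟩
  constructor
  · intro v hv
    exact le_csSup hSc.bddAbove ⟨v, hv, rfl⟩
  · have := hSc.sSup_mem hSne
    obtain ⟨v, hv1, hv2⟩ := this
    exact ⟨v, hv1, hv2.symm⟩

lemma dual_pos (hp : 1 ≤ p) (hf : IsNorm f) (ha : a ≠ 0) : 0 < dualNorm f a := by
  have hub := (dual_spec hp hf a).1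
  have hfa : 0 < f a := norm_pos hf ha
  have h1 : f ((f a)⁻¹ • a) ≤ 1 := by
    rw [hf.2.1, abs_of_pos (inv_pos.mpr hfa), inv_mul_cancel₀ hfa.ne']
  have h2 := hub _ h1
  rw [dot_smul] at h2
  have := dot_self_pos ha
  calc (0:ℝ) < (f a)⁻¹ * dot a a := by positivity
    _ ≤ dualNorm f a := h2

lemma dot_le_norm_mul (hf : IsNorm f)
    (hub : ∀ v, f v ≤ 1 → dot a v ≤ dualNorm f a) (w : Fin p → ℝ) :
    dot a w ≤ f w * dualNorm f a := by
  rcases eq_or_ne w 0 with rfl | hw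
  · simp [dot_zero, norm_zero hf]
  · have hfw : 0 < f w := norm_pos hf hw
    have h1 : f ((f w)⁻¹ • w) ≤ 1 := by
      rw [hf.2.1, abs_of_pos (inv_pos.mpr hfw), inv_mul_cancel₀ hfw.ne']
    have h2 := hub _ h1
    rw [dot_smul] at h2
    calc dot a w = f w * ((f w)⁻¹ * dot a w) := by field_simp
      _ ≤ f w * dualNorm f a := mul_le_mul_of_nonneg_left h2 hfw.le

end RCFAux

open RCFAux

/-- The direction of optimal robust counterfactuals (Lemma 5): `x_F + d • v` with
`d = (b − ⟪a, x_F⟫ + ρ·g*(a))/f*(a)` is an optimal robust counterfactual iff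
`f(v) ≤ 1` and `⟪a, v⟫ = f*(a)`. -/

theorem rcf_direction {p : ℕ} (hp : 1 ≤ p)
    (f g : (Fin p → ℝ) → ℝ) (hf : IsNorm f) (hg : IsNorm g)
    (a : Fin p → ℝ) (ha : a ≠ 0) (b : ℝ) (ρ : ℝ) (hρ : 0 < ρ)
    (xF : Fin p → ℝ) (hxF : dot a xF < b) (v : Fin p → ℝ) :
    IsOptRCF a b f g ρ xF
        (xF + ((b - dot a xF + ρ * dualNorm g a) / dualNorm f a) • v) ↔
      (f v ≤ 1 ∧ dot a v = dualNorm f a) := by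
  obtain ⟨hub, v₀, hv₀1, hv₀2⟩ := dual_spec hp hf a
  obtain ⟨hgub, s₀, hs₀1, hs₀2⟩ := dual_spec hp hg a
  have hFpos : 0 < dualNorm f a := dual_pos hp hf ha
  have hGpos : 0 < dualNorm g a := dual_pos hp hg ha
  set F := dualNorm f a with hF
  set G := dualNorm g a with hG
  set d : ℝ := (b - dot a xF + ρ * G) / F with hd
  have hdpos : 0 < d := div_pos (by nlinarith) hFpos
  have hdF : d * F = b - dot a xF + ρ * G := div_mul_cancel₀ _ hFpos.ne'
  -- robustness characterization
  have hrob : ∀ z : Fin p → ℝ, (∀ s, g s ≤ ρ → b ≤ dot a (z + s)) ↔ b + ρ * G ≤ dot a z := by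
    intro z
    constructor
    · intro h
      have hgs : g ((-ρ) • s₀) ≤ ρ := by
        rw [hg.2.1, abs_neg, abs_of_pos hρ]
        nlinarith [norm_nonneg' hg s₀]
      have := h _ hgs
      rw [dot_add, dot_smul, hs₀2] at this
      linarith
    · intro h s hs
      have h1 : dot a (-(ρ⁻¹ • s)) ≤ G := by
        refine hgub _ ?_
        rw [show -(ρ⁻¹ • s) = (-ρ⁻¹) • s by ext k; simp, hg.2.1, abs_neg,
          abs_of_pos (inv_pos.mpr hρ)]
        rw [inv_mul_le_iff₀ hρ, mul_one]
        exact hs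
      have h2 : dot a (-(ρ⁻¹ • s)) = -(ρ⁻¹ * dot a s) := by
        rw [show -(ρ⁻¹ • s) = (-ρ⁻¹) • s by ext k; simp, dot_smul]; ring
      rw [h2] at h1
      have h3 : -(ρ * G) ≤ dot a s := by
        have := mul_le_mul_of_nonneg_left h1 hρ.le
        rw [mul_neg, mul_inv_cancel_left₀ hρ.ne'] at this
        linarith
      rw [dot_add]
      linarith
  -- lower bound for feasible points
  have hlow : ∀ z : Fin p → ℝ, b + ρ * G ≤ dot a z → d ≤ f (z - xF) := by
    intro z hz
    have h1 : d * F ≤ dot a (z - xF) := by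
      have : dot a (z - xF) = dot a z + dot a ((-1 : ℝ) • xF) := by
        rw [← dot_add]; congr 1; ext k; simp; ring
      rw [this, dot_smul, hdF]
      linarith
    have h2 : dot a (z - xF) ≤ f (z - xF) * F := dot_le_norm_mul hf hub _
    nlinarith
  constructor
  · rintro ⟨h1, h2⟩
    have hfeas : b + ρ * G ≤ dot a xF + d * dot a v := by
      have := (hrob _).mp h1
      rwa [dot_add, dot_smul] at this
    have hge : F ≤ dot a v := by
      have : d * F ≤ d * dot a v := by rw [hdF]; linarith
      exact le_of_mul_le_mul_left this hdpos
    have hz₀ : ∀ s, g s ≤ ρ → b ≤ dot a ((xF + d • v₀) + s) := by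
      rw [hrob]
      rw [dot_add, dot_smul, hv₀2, hdF]
      linarith
    have h3 := h2 _ hz₀
    rw [add_sub_cancel_left, add_sub_cancel_left, hf.2.1, hf.2.1,
      abs_of_pos hdpos] at h3
    have hfv : f v ≤ 1 := by
      have : d * f v ≤ d * 1 := by rw [mul_one]; nlinarith
      exact le_of_mul_le_mul_left this hdpos
    exact ⟨hfv, le_antisymm (hub v hfv) hge⟩
  · rintro ⟨hfv, hdotv⟩
    constructor
    · rw [hrob, dot_add, dot_smul, hdotv, hdF]
      linarith
    · intro z hz
      rw [hrob] at hz
      rw [add_sub_cancel_left, hf.2.1, abs_of_pos hdpos]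
      calc d * f v ≤ d := by nlinarith
        _ ≤ f (z - xF) := hlow z hz
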